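/- With A, B positive definite, M invertible, ε > 0, and C_ε defined as C_ε = [(A M B Mᵀ + (ε²/4)I)^{1/2} − (ε/2)I](Mᵀ)^{-1}, the determinant of the block matrix X_{C_ε} = [[A, C_ε],[C_εᵀ, B]] equals ε^d · det(M)^{-2} · det((A M B Mᵀ + (ε²/4)I)^{1/2} − (ε/2)I). -/

import Mathlib

/-!
Put `K = A^{1/2} (A^{1/2} N A^{1/2} + ε²/4)^{1/2} A^{-1/2}` with `N = M B Mᵀ`. Then
`K² = A N + ε²/4` and `A⁻¹ K` is symmetric (it is a congruence of the symmetric square root by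
`A^{-1/2}`), so `(K - ε/2)ᵀ A⁻¹ (K - ε/2) = N - ε A⁻¹ (K - ε/2)`. Hence the Schur complement of `A`
in `X_C` is `B - Cᵀ A⁻¹ C = ε M⁻¹ A⁻¹ (K - ε/2) M⁻ᵀ`, and `det X_C = det A · det(B - Cᵀ A⁻¹ C)`.
-/

open Matrix

open Classical in
/-- The positive semidefinite square root (zero if not positive semidefinite). -/
noncomputable def psqrt {d : ℕ} (X : Matrix (Fin d) (Fin d) ℝ) : Matrix (Fin d) (Fin d) ℝ :=
  if h : X.PosSemidef then
    (h.1.eigenvectorUnitary : Matrix (Fin d) (Fin d) ℝ) *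
      diagonal ((↑) ∘ (√·) ∘ h.1.eigenvalues) *
      (star h.1.eigenvectorUnitary : Matrix (Fin d) (Fin d) ℝ)
  else 0

namespace Matrix

section Schur

variable {n R : Type*} [Fintype n] [DecidableEq n] [CommRing R]

lemma conj_mul_conj {P : Matrix n n R} (hP : IsUnit P.det) (S T : Matrix n n R) :
    P * S * P⁻¹ * (P * T * P⁻¹) = P * (S * T) * P⁻¹ := by
  calc P * S * P⁻¹ * (P * T * P⁻¹) = P * S * (P⁻¹ * P) * T * P⁻¹ := by
        simp only [Matrix.mul_assoc]
    _ = P * (S * T) * P⁻¹ := by rw [nonsing_inv_mul P hP, Matrix.mul_one, Matrix.mul_assoc P]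

lemma transpose_conj_mul_inv_mul_self {P S : Matrix n n R} (hP : IsUnit P.det) (hPT : Pᵀ = P)
    (hST : Sᵀ = S) : (P * S * P⁻¹)ᵀ * (P * P)⁻¹ = (P * P)⁻¹ * (P * S * P⁻¹) := by
  rw [transpose_mul, transpose_mul, transpose_nonsing_inv, hPT, hST, mul_inv_rev]
  calc P⁻¹ * (S * P) * (P⁻¹ * P⁻¹) = P⁻¹ * S * (P * P⁻¹) * P⁻¹ := by
        simp only [Matrix.mul_assoc]
    _ = P⁻¹ * (P⁻¹ * P) * S * P⁻¹ := by
        rw [mul_nonsing_inv P hP, nonsing_inv_mul P hP, Matrix.mul_one, Matrix.mul_one]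
    _ = P⁻¹ * P⁻¹ * (P * S * P⁻¹) := by simp only [Matrix.mul_assoc]

lemma transpose_sub_mul_mul_sub {A G K N : Matrix n n R} (t : R) (hGA : G * A = 1)
    (hKG : Kᵀ * G = G * K) (hK : K * K = A * N + t ^ 2 • 1) :
    (Kᵀ - t • 1) * G * (K - t • 1) = N - (2 * t) • (G * (K - t • 1)) := by
  have hKGK : Kᵀ * G * K = N + t ^ 2 • G := by
    rw [hKG, Matrix.mul_assoc, hK, Matrix.mul_add, ← Matrix.mul_assoc, hGA, Matrix.one_mul,
      Matrix.mul_smul, Matrix.mul_one]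
  calc (Kᵀ - t • 1) * G * (K - t • 1)
      = Kᵀ * G * K - t • (Kᵀ * G) - t • (G * K) + t ^ 2 • G := by
        simp only [Matrix.sub_mul, Matrix.mul_sub, Matrix.smul_mul, Matrix.mul_smul,
          Matrix.one_mul, Matrix.mul_one]
        module
    _ = N - (2 * t) • (G * (K - t • 1)) := by
        rw [hKGK, hKG, Matrix.mul_sub, Matrix.mul_smul, Matrix.mul_one]
        module

lemma schur_complement_eq {A B M K : Matrix n n R} (t : R) (hA : IsUnit A.det)
    (hM : IsUnit M.det) (hKA : Kᵀ * A⁻¹ = A⁻¹ * K) (hK : K * K = A * (M * B * Mᵀ) + t ^ 2 • 1) :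
    B - ((K - t • 1) * Mᵀ⁻¹)ᵀ * A⁻¹ * ((K - t • 1) * Mᵀ⁻¹)
      = (2 * t) • (M⁻¹ * (A⁻¹ * (K - t • 1)) * Mᵀ⁻¹) := by
  have hMT : IsUnit Mᵀ.det := by rwa [det_transpose]
  have hquad := transpose_sub_mul_mul_sub t (nonsing_inv_mul A hA) hKA hK
  rw [transpose_mul, transpose_nonsing_inv, transpose_transpose, transpose_sub,
    transpose_smul, transpose_one]
  calc B - M⁻¹ * (Kᵀ - t • 1) * A⁻¹ * ((K - t • 1) * Mᵀ⁻¹)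
      = B - M⁻¹ * ((Kᵀ - t • 1) * A⁻¹ * (K - t • 1)) * Mᵀ⁻¹ := by
        simp only [Matrix.mul_assoc]
    _ = B - (M⁻¹ * M) * B * (Mᵀ * Mᵀ⁻¹) + (2 * t) • (M⁻¹ * (A⁻¹ * (K - t • 1)) * Mᵀ⁻¹) := by
        rw [hquad, Matrix.mul_sub, Matrix.sub_mul, Matrix.mul_smul, Matrix.smul_mul]
        simp only [Matrix.mul_assoc]
        abel
    _ = (2 * t) • (M⁻¹ * (A⁻¹ * (K - t • 1)) * Mᵀ⁻¹) := by
        rw [nonsing_inv_mul M hM, mul_nonsing_inv _ hMT, Matrix.one_mul, Matrix.mul_one,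
          sub_self, zero_add]

end Schur

lemma det_fromBlocks_of_sq_eq {n 𝕜 : Type*} [Fintype n] [DecidableEq n] [Field 𝕜]
    {A B M K : Matrix n n 𝕜} (t : 𝕜) (hA : IsUnit A.det) (hM : IsUnit M.det)
    (hKA : Kᵀ * A⁻¹ = A⁻¹ * K) (hK : K * K = A * (M * B * Mᵀ) + t ^ 2 • 1) :
    (fromBlocks A ((K - t • 1) * Mᵀ⁻¹) ((K - t • 1) * Mᵀ⁻¹)ᵀ B).det
      = (2 * t) ^ Fintype.card n * (M.det ^ 2)⁻¹ * (K - t • 1).det := by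
  have : Invertible A := invertibleOfIsUnitDet A hA
  rw [det_fromBlocks₁₁, invOf_eq_nonsing_inv, schur_complement_eq t hA hM hKA hK, det_smul,
    det_mul, det_mul, det_mul, det_nonsing_inv, det_nonsing_inv, det_nonsing_inv, det_transpose,
    Ring.inverse_eq_inv']
  field_simp [hA.ne_zero, hM.ne_zero]

end Matrix

section psqrt

variable {d : ℕ} {X : Matrix (Fin d) (Fin d) ℝ}

lemma psqrt_mul_self (h : X.PosSemidef) : psqrt X * psqrt X = X := by
  rw [psqrt, dif_pos h]
  set U : Matrix (Fin d) (Fin d) ℝ := ↑h.1.eigenvectorUnitary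
  set D : Matrix (Fin d) (Fin d) ℝ := diagonal ((↑) ∘ (√·) ∘ h.1.eigenvalues)
  have hU : star U * U = 1 := h.1.eigenvectorUnitary.2.1
  have hD : D * D = diagonal (RCLike.ofReal ∘ h.1.eigenvalues) := by
    rw [diagonal_mul_diagonal]
    congr 1
    funext i
    simp [Real.mul_self_sqrt (h.eigenvalues_nonneg i)]
  conv_rhs => rw [h.1.spectral_theorem, Unitary.conjStarAlgAut_apply]
  calc U * D * star U * (U * D * star U) = U * (D * (star U * U) * D) * star U := by
        simp only [Matrix.mul_assoc]
    _ = _ := by rw [hU, Matrix.mul_one, hD]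

lemma transpose_psqrt (h : X.PosSemidef) : (psqrt X)ᵀ = psqrt X := by
  rw [psqrt, dif_pos h]
  simp [transpose_mul, Matrix.mul_assoc, star_eq_conjTranspose]

lemma isUnit_det_psqrt (h : X.PosDef) : IsUnit (psqrt X).det := by
  refine isUnit_iff_ne_zero.mpr fun h0 => h.det_pos.ne' ?_
  rw [← psqrt_mul_self h.posSemidef, det_mul, h0, zero_mul]

end psqrt

theorem stmt12_general {d : ℕ} (A B M : Matrix (Fin d) (Fin d) ℝ) (hA : A.PosDef) (hB : B.PosDef)
    (hM : IsUnit M.det) (ε : ℝ)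
    (K C : Matrix (Fin d) (Fin d) ℝ)
    (hK : K = psqrt A * psqrt (psqrt A * (M * B * Mᵀ) * psqrt A + (ε ^ 2 / 4) • 1) *
          (psqrt A)⁻¹)
    (hC : C = (K - (ε / 2) • 1) * (Mᵀ)⁻¹) :
    (Matrix.fromBlocks A C Cᵀ B).det = ε ^ d * (M.det ^ 2)⁻¹ * (K - (ε / 2) • 1).det := by
  set R := psqrt A
  set P := R * (M * B * Mᵀ) * R + (ε ^ 2 / 4) • 1
  have hR : IsUnit R.det := isUnit_det_psqrt hA
  have hRT : Rᵀ = R := transpose_psqrt hA.posSemidef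
  have hRR : R * R = A := psqrt_mul_self hA.posSemidef
  have hP : P.PosSemidef := by
    refine .add ?_ (PosSemidef.one.smul (by positivity))
    simpa [hRT] using (hB.posSemidef.mul_mul_conjTranspose_same M).mul_mul_conjTranspose_same R
  have hKK : K * K = A * (M * B * Mᵀ) + (ε / 2) ^ 2 • 1 := by
    calc K * K = R * P * R⁻¹ := by rw [hK, conj_mul_conj hR, psqrt_mul_self hP]
      _ = (R * R) * (M * B * Mᵀ) * (R * R⁻¹) + (ε ^ 2 / 4) • (R * R⁻¹) := by
        simp only [P, Matrix.mul_add, Matrix.add_mul, Matrix.mul_smul, Matrix.smul_mul,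
          Matrix.mul_one, Matrix.mul_assoc]
      _ = A * (M * B * Mᵀ) + (ε / 2) ^ 2 • 1 := by
        rw [hRR, mul_nonsing_inv R hR, Matrix.mul_one]
        ring_nf
  have hKA : Kᵀ * A⁻¹ = A⁻¹ * K := by
    rw [hK, ← hRR]
    exact transpose_conj_mul_inv_mul_self hR hRT (transpose_psqrt hP)
  rw [hC, det_fromBlocks_of_sq_eq _ hA.det_pos.ne'.isUnit hM hKA hKK, Fintype.card_fin]
  ring

theorem stmt12 {d : ℕ} (A B M : Matrix (Fin d) (Fin d) ℝ) (hA : A.PosDef) (hB : B.PosDef)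
    (hM : IsUnit M.det) (ε : ℝ) (hε : 0 < ε)
    (K C : Matrix (Fin d) (Fin d) ℝ)
    (hK : K = psqrt A * psqrt (psqrt A * (M * B * Mᵀ) * psqrt A + (ε ^ 2 / 4) • 1) *
          (psqrt A)⁻¹)
    (hC : C = (K - (ε / 2) • 1) * (Mᵀ)⁻¹) :
    (Matrix.fromBlocks A C Cᵀ B).det = ε ^ d * (M.det ^ 2)⁻¹ * (K - (ε / 2) • 1).det :=
  stmt12_general A B M hA hB hM ε K C hK hC
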